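/- arXiv:2106.14751 — 2 statements merged into one kernel-verified Lean document; each statement's English description precedes it below -/
import Mathlib

section
/- For every integer n ≥ 2, Σ_{j=1}^{n} Σ_{k=1}^{j} bel_k · S₂(j,k) · S₂(n,j) = 0, and bel_1 = 1. -/
open PowerSeries Finset

noncomputable section

/-- Composition of formal power series (the standard composition when the inner
series `f` has zero constant term, since then `coeff n (f ^ k) = 0` for `k > n`). -/
def pcomp {R : Type*} [CommRing R] (g f : PowerSeries R) : PowerSeries R :=
  PowerSeries.mk fun n =>
    ∑ k ∈ Finset.range (n + 1), PowerSeries.coeff (R := R) k g * PowerSeries.coeff (R := R) n (f ^ k)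

/-- The formal power series `log(1+t)` over `ℚ`. -/
def Lq : PowerSeries ℚ := PowerSeries.mk fun n => if n = 0 then 0 else (-1) ^ (n + 1) / n

/-- The formal power series `-log(1-t)` over `ℚ`. -/
def Labs : PowerSeries ℚ := PowerSeries.mk fun n => if n = 0 then 0 else 1 / n

/-- Signed Stirling numbers of the first kind: `(log(1+t))^k / k! = Σ S₁(n,k) tⁿ/n!`. -/
def S1 (n k : ℕ) : ℚ := n.factorial / k.factorial * PowerSeries.coeff (R := ℚ) n (Lq ^ k)

/-- Unsigned Stirling numbers of the first kind: `(-log(1-t))^k / k! = Σ |s(n,k)| tⁿ/n!`. -/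
def uS1 (n k : ℕ) : ℚ := n.factorial / k.factorial * PowerSeries.coeff (R := ℚ) n (Labs ^ k)

/-- Stirling numbers of the second kind: `(eᵗ-1)^k / k! = Σ S₂(n,k) tⁿ/n!`. -/
def S2 (n k : ℕ) : ℚ :=
  n.factorial / k.factorial * PowerSeries.coeff (R := ℚ) n ((PowerSeries.exp ℚ - 1) ^ k)

/-- `λ^(n-1) * (1)_{n,1/λ} = ∏_{j=1}^{n-1} (λ - j)`. -/
def dc (l : ℚ) (n : ℕ) : ℚ := ∏ j ∈ Finset.Ico 1 n, (l - j)

/-- Degenerate falling factorial `(1)_{n,λ} = ∏_{j=0}^{n-1} (1 - jλ)`. -/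
def ffac (l : ℚ) (n : ℕ) : ℚ := ∏ j ∈ Finset.range n, (1 - j * l)

/-- Degenerate logarithm `log_λ(1+t) = Σ_{n≥1} λ^{n-1}(1)_{n,1/λ} tⁿ/n!`. -/
def Ld (l : ℚ) : PowerSeries ℚ :=
  PowerSeries.mk fun n => if n = 0 then 0 else dc l n / n.factorial

/-- Degenerate exponential `e_λ(t) = Σ_{n≥0} (1)_{n,λ} tⁿ/n!`. -/
def Ed (l : ℚ) : PowerSeries ℚ := PowerSeries.mk fun n => ffac l n / n.factorial

/-- Degenerate Stirling numbers of the first kind. -/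
def S1d (l : ℚ) (n k : ℕ) : ℚ :=
  n.factorial / k.factorial * PowerSeries.coeff (R := ℚ) n (Ld l ^ k)

/-- Degenerate Stirling numbers of the second kind. -/
def S2d (l : ℚ) (n k : ℕ) : ℚ :=
  n.factorial / k.factorial * PowerSeries.coeff (R := ℚ) n ((Ed l - 1) ^ k)

/-- Bell numbers of the second kind: `log(1 + log(1+t)) = Σ_{n≥1} bel_n tⁿ/n!`. -/
def belNum (n : ℕ) : ℚ := n.factorial * PowerSeries.coeff (R := ℚ) n (pcomp Lq Lq)

/-- Bell numbers of the second kind via the explicit formula. -/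
def belN (m : ℕ) : ℚ :=
  ∑ k ∈ Finset.Icc 1 m, (-1) ^ (k - 1) * (k - 1).factorial * S1 m k

/-- Bell polynomials of the second kind. -/
def belPoly (n : ℕ) : Polynomial ℚ :=
  ∑ k ∈ Finset.Icc 1 n,
    Polynomial.C ((-1) ^ (k - 1) * (k - 1).factorial * S1 n k) * Polynomial.X ^ k

/-- Bell polynomials of the second kind evaluated at `x : ℚ`. -/
def belVal (x : ℚ) (m : ℕ) : ℚ :=
  ∑ k ∈ Finset.Icc 1 m, (-1) ^ (k - 1) * (k - 1).factorial * S1 m k * x ^ k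

/-- Degenerate Bell numbers of the second kind via generating function. -/
def belNumD (l : ℚ) (n : ℕ) : ℚ := n.factorial * PowerSeries.coeff (R := ℚ) n (pcomp (Ld l) (Ld l))

/-- Degenerate Bell numbers of the second kind via the explicit formula. -/
def belND (l : ℚ) (m : ℕ) : ℚ := ∑ j ∈ Finset.Icc 1 m, dc l j * S1d l m j

/-- Degenerate Bell polynomials of the second kind. -/
def belPolyD (l : ℚ) (n : ℕ) : Polynomial ℚ :=
  ∑ k ∈ Finset.Icc 1 n, Polynomial.C (dc l k * S1d l n k) * Polynomial.X ^ k

/-- `log(1+t)` as a power series over `ℚ[x]`. -/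
def LqP : PowerSeries (Polynomial ℚ) :=
  PowerSeries.mk fun n => if n = 0 then 0 else Polynomial.C ((-1) ^ (n + 1) / n : ℚ)

/-- `-log(1-t)` as a power series over `ℚ[x]`. -/
def LabsP : PowerSeries (Polynomial ℚ) :=
  PowerSeries.mk fun n => if n = 0 then 0 else Polynomial.C (1 / n : ℚ)

/-- `log(1-t)` as a power series over `ℚ[x]`. -/
def MP : PowerSeries (Polynomial ℚ) :=
  PowerSeries.mk fun n => if n = 0 then 0 else Polynomial.C (-(1 / n) : ℚ)

/-- `log_λ(1+t)` as a power series over `ℚ[x]`. -/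
def LdP (l : ℚ) : PowerSeries (Polynomial ℚ) :=
  PowerSeries.mk fun n => if n = 0 then 0 else Polynomial.C (dc l n / n.factorial)

/-- The polylogarithm `Li_k(y) = Σ_{m≥1} yᵐ/mᵏ` as a power series over `ℚ[x]`. -/
def LiP (k : ℤ) : PowerSeries (Polynomial ℚ) :=
  PowerSeries.mk fun m => if m = 0 then 0 else Polynomial.C (((m : ℚ) ^ k)⁻¹)

/-- The degenerate polylogarithm `Li_{k,λ}` as a power series over `ℚ[x]`. -/
def LidP (l : ℚ) (k : ℤ) : PowerSeries (Polynomial ℚ) :=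
  PowerSeries.mk fun m => if m = 0 then 0 else
    Polynomial.C ((-1) ^ (m - 1) * dc l m / ((m - 1).factorial * (m : ℚ) ^ k))

/-- `-x · log(1-t)` over `ℚ[x]`. -/
def innerP : PowerSeries (Polynomial ℚ) := PowerSeries.C (R := Polynomial ℚ) Polynomial.X * LabsP

/-- `-x · log_λ(1-t)` over `ℚ[x]`. -/
def innerD (l : ℚ) : PowerSeries (Polynomial ℚ) :=
  PowerSeries.C (R := Polynomial ℚ) Polynomial.X *
    PowerSeries.mk fun n => if n = 0 then 0 else
      Polynomial.C ((-1) ^ (n + 1) * dc l n / n.factorial)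

/-- Poly-Bell polynomials of the second kind via generating function. -/
def polyBellP (k : ℤ) (n : ℕ) : Polynomial ℚ :=
  (n.factorial : ℚ) • PowerSeries.coeff (R := Polynomial ℚ) n (pcomp (LiP k) innerP)

/-- Poly-Bell polynomials of the second kind via the explicit formula. -/
def belPk (k : ℤ) (n : ℕ) : Polynomial ℚ :=
  ∑ l ∈ Finset.Icc 1 n,
    Polynomial.C ((((l : ℚ) ^ (k - 1))⁻¹) * (l - 1).factorial * uS1 n l) * Polynomial.X ^ l

/-- Degenerate poly-Bell polynomials of the second kind via generating function. -/
def belDPk (l : ℚ) (k : ℤ) (n : ℕ) : Polynomial ℚ :=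
  (n.factorial : ℚ) • PowerSeries.coeff (R := Polynomial ℚ) n (pcomp (LidP l k) (innerD l))

/-- Degenerate poly-Bell polynomials of the second kind via the explicit formula. -/
def belE (l : ℚ) (k : ℤ) (m : ℕ) : Polynomial ℚ :=
  (-1 : Polynomial ℚ) ^ (m - 1) *
    ∑ j ∈ Finset.Icc 1 m,
      Polynomial.C ((((j : ℚ) ^ (k - 1))⁻¹) * dc l j * S1d l m j) * Polynomial.X ^ j

/-!
The matrices `S₁` and `S₂` are mutually inverse: `∑ₖ S₂(j,k) S₁(k,i) = δ_{ji}`, proved by induction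
on `j` from the triangular recurrences, which in turn come from differentiating the generating
functions, using `(eᵗ - 1)' = (eᵗ - 1) + 1` and `(1 + t) log(1 + t)' = 1`.
Since `S₁(i,1) = (-1)^(i-1) (i-1)!`, the explicit formula reads `bel_k = ∑ᵢ S₁(i,1) S₁(k,i)`, so
inversion gives `∑ₖ bel_k S₂(j,k) = S₁(j,1)`, and a second inversion gives
`∑ⱼ S₁(j,1) S₂(n,j) = δ_{n1}`, which vanishes for `n ≥ 2`.
-/

theorem coeff_pow_eq_zero_of_lt {R : Type*} [CommSemiring R] {f : R⟦X⟧}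
    (hf : constantCoeff f = 0) {n k : ℕ} (h : n < k) : coeff n (f ^ k) = 0 :=
  X_pow_dvd_iff.1 (pow_dvd_pow_of_dvd (X_dvd_iff.2 hf) k) n h

theorem Lq_eq_log : Lq = log ℚ := by
  ext n
  simp [Lq]

theorem one_add_X_mul_derivative_log : (1 + X) * d⁄dX ℚ (log ℚ) = 1 := by
  ext (_ | n)
  · simp [deriv_log]
  · simp [add_mul, coeff_succ_X_mul, deriv_log, pow_succ, coeff_one]

theorem coeff_X_mul_derivative {R : Type*} [CommSemiring R] (f : R⟦X⟧) (n : ℕ) :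
    coeff n (X * d⁄dX R f) = n * coeff n f := by
  rcases n with _ | n
  · simp
  · rw [coeff_succ_X_mul, coeff_derivative, mul_comm, Nat.cast_succ]

theorem coeff_succ_exp_sub_one_pow_succ (n k : ℕ) :
    coeff (n + 1) ((exp ℚ - 1) ^ (k + 1)) * ((n : ℚ) + 1) =
      (k + 1) * (coeff n ((exp ℚ - 1) ^ (k + 1)) + coeff n ((exp ℚ - 1) ^ k)) := by
  have hderiv : d⁄dX ℚ ((exp ℚ - 1) ^ (k + 1)) =
      C ((k : ℚ) + 1) * ((exp ℚ - 1) ^ (k + 1) + (exp ℚ - 1) ^ k) := by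
    rw [derivative_pow, map_sub, derivative_exp, derivative_one, sub_zero]
    simp only [Nat.add_sub_cancel, Nat.cast_add, Nat.cast_one, map_add, map_one, map_natCast]
    ring
  rw [← coeff_derivative, hderiv, coeff_C_mul, map_add]

theorem coeff_succ_log_pow_succ (n k : ℕ) :
    coeff (n + 1) (log ℚ ^ (k + 1)) * ((n : ℚ) + 1) + n * coeff n (log ℚ ^ (k + 1)) =
      (k + 1) * coeff n (log ℚ ^ k) := by
  have hderiv : (1 + X) * d⁄dX ℚ (log ℚ ^ (k + 1)) = C ((k : ℚ) + 1) * log ℚ ^ k := by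
    rw [derivative_pow, Nat.add_sub_cancel, mul_left_comm, one_add_X_mul_derivative_log, mul_one,
      map_add, map_one, map_natCast, Nat.cast_succ]
  have := congrArg (coeff n) hderiv
  rwa [add_mul, one_mul, map_add, coeff_derivative, coeff_X_mul_derivative, coeff_C_mul] at this

theorem S1_eq_zero_of_lt {n k : ℕ} (h : n < k) : S1 n k = 0 := by
  simp [S1, Lq_eq_log, coeff_pow_eq_zero_of_lt constantCoeff_log h]

theorem S2_eq_zero_of_lt {n k : ℕ} (h : n < k) : S2 n k = 0 := by
  have hE : constantCoeff (exp ℚ - 1) = 0 := by simp [constantCoeff_exp]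
  simp [S2, coeff_pow_eq_zero_of_lt hE h]

@[simp]
theorem S1_zero_zero : S1 0 0 = 1 := by
  simp [S1]

@[simp]
theorem S2_zero_zero : S2 0 0 = 1 := by
  simp [S2]

@[simp]
theorem S1_succ_zero (n : ℕ) : S1 (n + 1) 0 = 0 := by
  simp [S1, coeff_one]

@[simp]
theorem S2_succ_zero (n : ℕ) : S2 (n + 1) 0 = 0 := by
  simp [S2, coeff_one]

theorem S1_succ_one (n : ℕ) : S1 (n + 1) 1 = (-1) ^ n * n.factorial := by
  have hn : (n : ℚ) + 1 ≠ 0 := by positivity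
  simp only [S1, Lq, coeff_mk, pow_one, Nat.add_one_ne_zero, if_false, Nat.factorial_succ,
    Nat.factorial_zero, Nat.cast_mul, Nat.cast_succ]
  field_simp
  ring

theorem S1_succ_succ (n k : ℕ) : S1 (n + 1) (k + 1) = S1 n k - n * S1 n (k + 1) := by
  have h := coeff_succ_log_pow_succ n k
  simp only [S1, Lq_eq_log, Nat.factorial_succ, Nat.cast_mul, Nat.cast_succ]
  field_simp
  linear_combination h

theorem S2_succ_succ (n k : ℕ) : S2 (n + 1) (k + 1) = (k + 1) * S2 n (k + 1) + S2 n k := by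
  have h := coeff_succ_exp_sub_one_pow_succ n k
  simp only [S2, Nat.factorial_succ, Nat.cast_mul, Nat.cast_succ]
  field_simp
  linear_combination h

theorem sum_range_S2_mul_S1 (j i : ℕ) :
    ∑ k ∈ range (j + 1), S2 j k * S1 k i = if j = i then 1 else 0 := by
  induction j generalizing i with
  | zero => rcases i with _ | i <;> simp [S1_eq_zero_of_lt]
  | succ j ih =>
    rw [sum_range_succ', S2_succ_zero, zero_mul, add_zero]
    rcases i with _ | i
    · simp
    have hshift : ∑ k ∈ range (j + 1), ((k : ℚ) + 1) * S2 j (k + 1) * S1 (k + 1) (i + 1) =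
        ∑ k ∈ range (j + 1), (k : ℚ) * S2 j k * S1 k (i + 1) := by
      rw [sum_range_succ _ j, S2_eq_zero_of_lt (Nat.lt_succ_self j), mul_zero, zero_mul, add_zero,
        sum_range_succ']
      simp
    calc ∑ k ∈ range (j + 1), S2 (j + 1) (k + 1) * S1 (k + 1) (i + 1)
        = ∑ k ∈ range (j + 1), (((k : ℚ) + 1) * S2 j (k + 1) * S1 (k + 1) (i + 1) +
            (S2 j k * S1 k i - k * S2 j k * S1 k (i + 1))) := by
          refine sum_congr rfl fun k _ => ?_
          rw [S2_succ_succ, S1_succ_succ]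
          ring
      _ = ∑ k ∈ range (j + 1), S2 j k * S1 k i := by
          rw [sum_add_distrib, hshift, sum_sub_distrib]
          ring
      _ = if j + 1 = i + 1 then 1 else 0 := by simp [ih]

theorem sum_Icc_S2_mul_S1 (j : ℕ) {i : ℕ} (hi : 1 ≤ i) :
    ∑ k ∈ Icc 1 j, S2 j k * S1 k i = if j = i then 1 else 0 := by
  rw [← sum_range_S2_mul_S1, range_eq_Ico, sum_eq_sum_Ico_succ_bot j.succ_pos,
    S1_eq_zero_of_lt hi, mul_zero, zero_add]
  rfl

theorem belN_eq_sum (m : ℕ) : belN m = ∑ k ∈ Icc 1 m, S1 k 1 * S1 m k := by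
  refine sum_congr rfl fun k hk => ?_
  obtain ⟨i, rfl⟩ : ∃ i, k = i + 1 := ⟨k - 1, by grind⟩
  simp [S1_succ_one]

theorem sum_belN_mul_S2 (j : ℕ) : ∑ k ∈ Icc 1 j, belN k * S2 j k = S1 j 1 := by
  calc ∑ k ∈ Icc 1 j, belN k * S2 j k
      = ∑ k ∈ Icc 1 j, ∑ i ∈ Icc 1 j, S1 i 1 * (S2 j k * S1 k i) := by
        refine sum_congr rfl fun k hk => ?_
        rw [belN_eq_sum, sum_mul, sum_subset (Icc_subset_Icc_right (mem_Icc.1 hk).2)]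
        · exact sum_congr rfl fun i _ => by ring
        · intro i hi hik
          rw [S1_eq_zero_of_lt (show k < i by grind), mul_zero, zero_mul]
    _ = ∑ i ∈ Icc 1 j, S1 i 1 * if j = i then 1 else 0 := by
        rw [sum_comm]
        refine sum_congr rfl fun i hi => ?_
        rw [← mul_sum, sum_Icc_S2_mul_S1 j (mem_Icc.1 hi).1]
    _ = S1 j 1 := by
        rcases j with _ | j
        · simp [S1_eq_zero_of_lt]
        · simp

theorem stmt3 (n : ℕ) (hn : 2 ≤ n) :
    (∑ j ∈ Finset.Icc 1 n, ∑ k ∈ Finset.Icc 1 j, belN k * S2 j k * S2 n j) = 0 ∧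
      belN 1 = 1 := by
  constructor
  · simp_rw [← sum_mul, sum_belN_mul_S2, mul_comm (S1 _ 1), sum_Icc_S2_mul_S1 n le_rfl]
    exact if_neg (by omega)
  · have h11 : S1 1 1 = 1 := by simpa using S1_succ_one 0
    simp [belN_eq_sum, h11]

end
end

section
/- For every integers n ≥ 1 and k, (-1)^(n-1) bel_{n,λ}^{(k)}(x) = Σ_{l=1}^{n} (1/l^(k-1)) (1)_{l,1/λ} λ^(l-1) x^l S_{1,λ}(n,l). -/
open PowerSeries Finset

noncomputable section

/-! `innerD λ = x · (-log_λ(1-t))` is `x` times the series `log_λ(1+t)` with `t ↦ -t` and an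
overall sign, so `[tⁿ] (innerD λ)ʲ = (-1)ⁿ⁺ʲ xʲ [tⁿ] (log_λ(1+t))ʲ = (-1)ⁿ⁺ʲ xʲ j!/n! S_{1,λ}(n,j)`.
Composing with `Li_{k,λ}`, whose `j`-th coefficient is `(-1)ʲ⁻¹ (1)_{j,1/λ} λʲ⁻¹ / (j! jᵏ⁻¹)`,
the factorials cancel and the signs `(-1)ⁿ⁻¹ (-1)ʲ⁻¹ (-1)ⁿ⁺ʲ` multiply to `1`. -/

theorem coeff_pcomp_of_constantCoeff_eq_zero {R : Type*} [CommRing R] {g : PowerSeries R}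
    (hg : constantCoeff g = 0) (f : PowerSeries R) (n : ℕ) :
    coeff n (pcomp g f) = ∑ j ∈ Icc 1 n, coeff j g * coeff n (f ^ j) := by
  rw [pcomp, coeff_mk, range_eq_Ico, sum_eq_sum_Ico_succ_bot n.succ_pos,
    coeff_zero_eq_constantCoeff, hg, zero_mul, zero_add, zero_add, Nat.succ_eq_add_one,
    Ico_add_one_right_eq_Icc]

theorem coeff_pow_neg_rescale_neg_one {R : Type*} [CommRing R] (f : PowerSeries R) (n j : ℕ) :
    coeff n ((-rescale (-1 : R) f) ^ j) = (-1) ^ (n + j) * coeff n (f ^ j) := by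
  rw [neg_pow, ← map_pow, ← map_one (C (R := R)), ← map_neg, ← map_pow, coeff_C_mul,
    coeff_rescale, pow_add]
  ring

theorem innerD_eq (l : ℚ) :
    innerD l = C (Polynomial.X : Polynomial ℚ) * map Polynomial.C (-rescale (-1) (Ld l)) := by
  rw [innerD]
  congr 1
  ext n : 1
  simp only [coeff_mk, coeff_map, map_neg, coeff_rescale, Ld]
  split_ifs
  · simp
  · rw [← map_neg]
    exact congrArg Polynomial.C (by ring)

theorem coeff_innerD_pow (l : ℚ) (n j : ℕ) :
    coeff n (innerD l ^ j) =
      Polynomial.C ((-1) ^ (n + j) * coeff n (Ld l ^ j)) * Polynomial.X ^ j := by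
  rw [innerD_eq, mul_pow, ← map_pow, ← map_pow, coeff_C_mul, coeff_map,
    coeff_pow_neg_rescale_neg_one, mul_comm]

theorem coeff_LidP {l : ℚ} {k : ℤ} {j : ℕ} (hj : j ≠ 0) :
    coeff j (LidP l k) =
      Polynomial.C ((-1) ^ (j - 1) * dc l j / (j.factorial * (j : ℚ) ^ (k - 1))) := by
  have hj' : (j : ℚ) ≠ 0 := Nat.cast_ne_zero.mpr hj
  rw [LidP, coeff_mk, if_neg hj, ← Nat.mul_factorial_pred hj, zpow_sub_one₀ hj']
  congr 1
  push_cast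
  field_simp

theorem neg_one_pow_pred_mul_neg_one_pow_pred_mul_neg_one_pow_add {R : Type*} [Ring R]
    {n j : ℕ} (hn : n ≠ 0) (hj : j ≠ 0) :
    (-1 : R) ^ (n - 1) * (-1) ^ (j - 1) * (-1) ^ (n + j) = 1 := by
  obtain ⟨n, rfl⟩ := Nat.exists_eq_succ_of_ne_zero hn
  obtain ⟨j, rfl⟩ := Nat.exists_eq_succ_of_ne_zero hj
  simp only [Nat.succ_sub_one, ← pow_add]
  exact Even.neg_one_pow ⟨n + j + 1, by omega⟩

theorem stmt15_general (l : ℚ) (k : ℤ) (n : ℕ) :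
    (-1 : Polynomial ℚ) ^ (n - 1) * belDPk l k n =
      ∑ m ∈ Finset.Icc 1 n,
        Polynomial.C ((((m : ℚ) ^ (k - 1))⁻¹) * dc l m * S1d l n m) *
          Polynomial.X ^ m := by
  have hLidP : constantCoeff (LidP l k) = 0 := by simp [LidP]
  rw [belDPk, coeff_pcomp_of_constantCoeff_eq_zero hLidP, smul_sum, mul_sum]
  refine sum_congr rfl fun m hm => ?_
  obtain ⟨hm, hmn⟩ := mem_Icc.mp hm
  have hsign : (-1 : ℚ) ^ (n - 1) * (-1) ^ (m - 1) * (-1) ^ (n + m) = 1 :=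
    neg_one_pow_pred_mul_neg_one_pow_pred_mul_neg_one_pow_add (by omega) (by omega)
  rw [coeff_LidP (by omega), coeff_innerD_pow, Polynomial.smul_eq_C_mul, ← map_one Polynomial.C,
    ← map_neg, ← map_pow]
  simp only [← mul_assoc, ← map_mul]
  congr 2
  rw [S1d]
  linear_combination
    (((m : ℚ) ^ (k - 1))⁻¹ * dc l m * (n.factorial / m.factorial * coeff n (Ld l ^ m))) * hsign

theorem stmt15 (l : ℚ) (k : ℤ) (n : ℕ) (hn : 1 ≤ n) :
    (-1 : Polynomial ℚ) ^ (n - 1) * belDPk l k n =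
      ∑ m ∈ Finset.Icc 1 n,
        Polynomial.C ((((m : ℚ) ^ (k - 1))⁻¹) * dc l m * S1d l n m) *
          Polynomial.X ^ m :=
  stmt15_general l k n

end
end
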